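/- Fix α > 0, and for r > 0 and x ∈ ℂ define I_r(x) := ∫_{−π}^{π} r / |r·e^{iθ} − x|^{2+α} dθ. Then there exists a constant a > 1, depending only on α, such that for all r > 0 and all x ∈ ℂ with |x| > r, a^{−1}·r/(|x|·(|x| − r)^{1+α}) ≤ I_r(x) ≤ a·r/(|x|·(|x| − r)^{1+α}). -/

import Mathlib

/-- `I_r(x) = ∫_{−π}^{π} r/|r·e^{iθ} − x|^{2+α} dθ`. -/
noncomputable def Icirc (α : ℝ) (r : ℝ) (x : ℂ) : ℝ :=
  ∫ θ in (-Real.pi)..Real.pi,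
    r / ‖(r : ℂ) * Complex.exp ((θ : ℂ) * Complex.I) - x‖ ^ (2 + α)

open Real intervalIntegral

/-!
After a rotation, `x = R > r`; write `d = R - r` and `ρ(θ) = |r e^{iθ} - R|`, so that
`ρ² = d² + 4rR sin²(θ/2)`. On the arc `|θ| ≤ d / R` this gives `ρ ≤ 2d`, and that arc alone
already yields the lower bound. For the upper bound, Jordan's inequality gives
`2ρ ≥ d + c|θ|` with `c = (2/π)√(rR)`, and `ρ^{2+α} ≥ d^α ρ²` lowers the exponent to `2`, where
`∫_{-π}^{π} (d + c|θ|)⁻² dθ = 2π / (d (d + cπ))` is explicit; finally `d + cπ = d + 2√(rR) ≥ R`.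
-/

theorem sq_norm_mul_exp_sub (r R θ : ℝ) :
    ‖(r : ℂ) * Complex.exp (θ * Complex.I) - R‖ ^ 2 = (R - r) ^ 2 + 4 * r * R * sin (θ / 2) ^ 2 := by
  rw [Complex.sq_norm, Complex.normSq_apply]
  simp only [Complex.sub_re, Complex.sub_im, Complex.re_ofReal_mul, Complex.im_ofReal_mul,
    Complex.exp_ofReal_mul_I_re, Complex.exp_ofReal_mul_I_im, Complex.ofReal_re, Complex.ofReal_im]
  have hsin : sin (θ / 2) ^ 2 = 1 / 2 - cos θ / 2 := by
    rw [sin_sq_eq_half_sub, mul_div_cancel₀ θ two_ne_zero]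
  linear_combination r ^ 2 * sin_sq_add_cos_sq θ - 4 * r * R * hsin

section CircleDistance

variable {r R θ : ℝ}

theorem sub_le_norm_mul_exp_sub (hr : 0 ≤ r) :
    R - r ≤ ‖(r : ℂ) * Complex.exp (θ * Complex.I) - R‖ := by
  have := norm_sub_norm_le (R : ℂ) ((r : ℂ) * Complex.exp (θ * Complex.I))
  rw [norm_sub_rev, norm_mul, Complex.norm_exp_ofReal_mul_I, mul_one, Complex.norm_real,
    Complex.norm_real, Real.norm_of_nonneg hr, Real.norm_eq_abs] at this
  linarith [le_abs_self R]

theorem norm_mul_exp_sub_pos (hr : 0 ≤ r) (hrR : r < R) :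
    0 < ‖(r : ℂ) * Complex.exp (θ * Complex.I) - R‖ :=
  (sub_pos.2 hrR).trans_le (sub_le_norm_mul_exp_sub hr)

theorem norm_mul_exp_sub_le_two_mul (hr : 0 ≤ r) (hrR : r ≤ R) (hθ : R * |θ| ≤ R - r) :
    ‖(r : ℂ) * Complex.exp (θ * Complex.I) - R‖ ≤ 2 * (R - r) := by
  have hR : 0 ≤ R := hr.trans hrR
  have hsin : 4 * sin (θ / 2) ^ 2 ≤ θ ^ 2 := by
    nlinarith [sin_sq_le_sq (x := θ / 2)]
  have hrRθ : 4 * r * R * sin (θ / 2) ^ 2 ≤ (R * |θ|) ^ 2 := by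
    rw [mul_pow, sq_abs]
    nlinarith [mul_le_mul_of_nonneg_left hsin (mul_nonneg hr hR),
      mul_le_mul_of_nonneg_right (mul_le_mul_of_nonneg_right hrR hR) (sq_nonneg θ)]
  rw [← sq_le_sq₀ (norm_nonneg _) (by linarith : (0:ℝ) ≤ 2 * (R - r)), sq_norm_mul_exp_sub]
  nlinarith [pow_le_pow_left₀ (mul_nonneg hR (abs_nonneg θ)) hθ 2]

theorem add_mul_abs_le_two_mul_norm_mul_exp_sub (hr : 0 ≤ r) (hrR : r ≤ R) (hθ : |θ| ≤ π) :
    R - r + 2 / π * √(r * R) * |θ| ≤ 2 * ‖(r : ℂ) * Complex.exp (θ * Complex.I) - R‖ := by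
  have hjordan : 2 / π * |θ / 2| ≤ |sin (θ / 2)| :=
    mul_abs_le_abs_sin (by rw [abs_div, abs_two]; linarith)
  have hsin : 2 * √(r * R) * |sin (θ / 2)| ≤ ‖(r : ℂ) * Complex.exp (θ * Complex.I) - R‖ := by
    rw [← sq_le_sq₀ (by positivity) (norm_nonneg _), sq_norm_mul_exp_sub, mul_pow, mul_pow,
      sq_sqrt (mul_nonneg hr (hr.trans hrR)), sq_abs]
    nlinarith [sq_nonneg (R - r)]
  have : 2 / π * √(r * R) * |θ| ≤ 2 * √(r * R) * |sin (θ / 2)| := by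
    rw [abs_div, abs_two] at hjordan
    nlinarith [mul_le_mul_of_nonneg_left hjordan (sqrt_nonneg (r * R))]
  linarith [sub_le_norm_mul_exp_sub (θ := θ) (R := R) hr]

end CircleDistance

theorem integral_norm_mul_exp_sub_eq_norm {E : Type*} [NormedAddCommGroup E] [NormedSpace ℝ E]
    (F : ℝ → E) (r : ℝ) (x : ℂ) :
    ∫ θ in -π..π, F ‖(r : ℂ) * Complex.exp (θ * Complex.I) - x‖ =
      ∫ θ in -π..π, F ‖(r : ℂ) * Complex.exp (θ * Complex.I) - ‖x‖‖ := by
  set g : ℝ → E := fun θ => F ‖(r : ℂ) * Complex.exp (θ * Complex.I) - x‖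
  have hper : Function.Periodic g (2 * π) := fun θ => by
    simp only [g, Complex.ofReal_add, Complex.ofReal_mul, Complex.ofReal_ofNat, add_mul,
      Complex.exp_add, Complex.exp_two_pi_mul_I, mul_one]
  -- `x = ‖x‖ e^{i arg x}`, so rotating the circle by `arg x` moves `‖x‖` to `x`.
  have hrot (θ : ℝ) : g (θ + x.arg) = F ‖(r : ℂ) * Complex.exp (θ * Complex.I) - ‖x‖‖ := by
    have : (r : ℂ) * Complex.exp (↑(θ + x.arg) * Complex.I) - x =
        Complex.exp (x.arg * Complex.I) * ((r : ℂ) * Complex.exp (θ * Complex.I) - ‖x‖) := by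
      rw [Complex.ofReal_add, add_mul, Complex.exp_add]
      linear_combination Complex.norm_mul_exp_arg_mul_I x
    simp only [g, this, norm_mul, Complex.norm_exp_ofReal_mul_I, one_mul]
  calc ∫ θ in -π..π, g θ = ∫ θ in -π + x.arg..-π + x.arg + 2 * π, g θ := by
        rw [hper.intervalIntegral_add_eq (-π + x.arg) (-π)]; ring_nf
    _ = ∫ θ in -π..π, g (θ + x.arg) := by
        rw [integral_comp_add_right]; ring_nf
    _ = _ := by simp only [hrot]

theorem Icirc_eq_Icirc_norm (α r : ℝ) (x : ℂ) : Icirc α r x = Icirc α r ‖x‖ :=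
  integral_norm_mul_exp_sub_eq_norm (fun ρ => r / ρ ^ (2 + α)) r x

section InverseSquare

variable {d c : ℝ}

theorem continuous_inv_sq_add_mul_abs (hd : 0 < d) (hc : 0 ≤ c) :
    Continuous fun θ : ℝ => ((d + c * |θ|) ^ 2)⁻¹ :=
  Continuous.inv₀ (by fun_prop) fun _ => by positivity

theorem integral_inv_sq_add_mul_abs {b : ℝ} (hd : 0 < d) (hc : 0 ≤ c) (hb : 0 ≤ b) :
    ∫ θ in -b..b, ((d + c * |θ|) ^ 2)⁻¹ = 2 * b / (d * (d + c * b)) := by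
  set g : ℝ → ℝ := fun θ => ((d + c * |θ|) ^ 2)⁻¹
  have hg : Continuous g := continuous_inv_sq_add_mul_abs hd hc
  have hderiv (θ : ℝ) (hθ : θ ∈ Set.uIcc 0 b) :
      HasDerivAt (fun t => t / (d * (d + c * t))) (g θ) θ := by
    rw [Set.uIcc_of_le hb] at hθ
    have hθ' : d + c * θ ≠ 0 := by nlinarith [hθ.1]
    refine ((hasDerivAt_id' θ).div ((((hasDerivAt_id' θ).const_mul c).const_add d).const_mul d)
      (mul_ne_zero hd.ne' hθ')).congr_deriv ?_
    simp only [g, abs_of_nonneg hθ.1]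
    field_simp
    ring
  have hhalf : ∫ θ in (0 : ℝ)..b, g θ = b / (d * (d + c * b)) := by
    rw [integral_eq_sub_of_hasDerivAt hderiv (hg.intervalIntegrable _ _)]
    simp
  have hneg : ∫ θ in -b..0, g θ = ∫ θ in (0 : ℝ)..b, g θ := by
    simpa [g] using (integral_comp_neg (a := 0) (b := b) g).symm
  rw [← integral_add_adjacent_intervals (hg.intervalIntegrable _ 0) (hg.intervalIntegrable 0 _),
    hneg, hhalf]
  ring

end InverseSquare

section OffCircle

variable {α r R : ℝ}

theorem continuous_div_norm_mul_exp_sub_rpow (hr : 0 ≤ r) (hrR : r < R) :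
    Continuous fun θ : ℝ => r / ‖(r : ℂ) * Complex.exp (θ * Complex.I) - R‖ ^ (2 + α) :=
  continuous_const.div
    ((by fun_prop : Continuous _).rpow_const fun _ => .inl (norm_mul_exp_sub_pos hr hrR).ne')
    fun _ => (rpow_pos_of_pos (norm_mul_exp_sub_pos hr hrR) _).ne'

theorem inv_two_rpow_mul_le_Icirc (hα : 0 ≤ 2 + α) (hr : 0 < r) (hrR : r < R) :
    (2 ^ (2 + α))⁻¹ * (r / (R * (R - r) ^ (1 + α))) ≤ Icirc α r R := by
  have hR : 0 < R := hr.trans hrR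
  have hd : 0 < R - r := sub_pos.2 hrR
  have hcont := continuous_div_norm_mul_exp_sub_rpow (α := α) hr.le hrR
  have hdR : (R - r) / R ≤ π := by
    rw [div_le_iff₀ hR]; nlinarith [pi_gt_three]
  have hnear (θ : ℝ) (hθ : θ ∈ Set.Icc 0 ((R - r) / R)) :
      r / (2 * (R - r)) ^ (2 + α) ≤ r / ‖(r : ℂ) * Complex.exp (θ * Complex.I) - R‖ ^ (2 + α) := by
    have hθR : R * |θ| ≤ R - r := by
      rw [abs_of_nonneg hθ.1, ← le_div_iff₀' hR]; exact hθ.2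
    exact div_le_div_of_nonneg_left hr.le
      (rpow_pos_of_pos (norm_mul_exp_sub_pos hr.le hrR) _)
      (rpow_le_rpow (norm_nonneg _) (norm_mul_exp_sub_le_two_mul hr.le hrR.le hθR) hα)
  calc (2 ^ (2 + α))⁻¹ * (r / (R * (R - r) ^ (1 + α)))
      = ∫ _ in (0 : ℝ)..(R - r) / R, r / (2 * (R - r)) ^ (2 + α) := by
        rw [integral_const, smul_eq_mul, sub_zero, mul_rpow zero_le_two hd.le,
          show (2 : ℝ) + α = 1 + α + 1 by ring, rpow_add_one hd.ne']
        field_simp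
    _ ≤ ∫ θ in (0 : ℝ)..(R - r) / R,
          r / ‖(r : ℂ) * Complex.exp (θ * Complex.I) - R‖ ^ (2 + α) :=
        integral_mono_on (by positivity) intervalIntegrable_const (hcont.intervalIntegrable _ _)
          hnear
    _ ≤ Icirc α r R :=
        integral_mono_interval (by linarith [pi_pos]) (by positivity) hdR
          (.of_forall fun θ => by positivity) (hcont.intervalIntegrable _ _)

theorem Icirc_le_eight_pi_mul (hα : 0 ≤ α) (hr : 0 < r) (hrR : r < R) :
    Icirc α r R ≤ 8 * π * (r / (R * (R - r) ^ (1 + α))) := by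
  have hd : 0 < R - r := sub_pos.2 hrR
  set c := 2 / π * √(r * R)
  have hc : 0 ≤ c := by positivity
  have hfar (θ : ℝ) (hθ : θ ∈ Set.Icc (-π) π) :
      r / ‖(r : ℂ) * Complex.exp (θ * Complex.I) - R‖ ^ (2 + α) ≤
        4 * r / (R - r) ^ α * ((R - r + c * |θ|) ^ 2)⁻¹ := by
    set ρ := ‖(r : ℂ) * Complex.exp (θ * Complex.I) - R‖
    have hdρ : R - r ≤ ρ := sub_le_norm_mul_exp_sub hr.le
    have hcρ : R - r + c * |θ| ≤ 2 * ρ :=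
      add_mul_abs_le_two_mul_norm_mul_exp_sub hr.le hrR.le (abs_le.2 hθ)
    have hρ : 0 < ρ := norm_mul_exp_sub_pos hr.le hrR
    have key : (R - r) ^ α * (R - r + c * |θ|) ^ 2 ≤ 4 * ρ ^ (2 + α) := by
      rw [add_comm, rpow_add hρ, rpow_two]
      nlinarith [rpow_le_rpow hd.le hdρ hα, rpow_pos_of_pos hd α,
        pow_le_pow_left₀ (by positivity) hcρ 2]
    calc r / ρ ^ (2 + α) ≤ r / ((R - r) ^ α * (R - r + c * |θ|) ^ 2 / 4) :=
          div_le_div_of_nonneg_left hr.le (by positivity) (by linarith)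
      _ = _ := by field_simp
  have hR_le : R ≤ R - r + c * π := by
    have : r ≤ √(r * R) := le_sqrt_of_sq_le (by nlinarith)
    simp only [c, div_mul_eq_mul_div, div_mul_cancel₀ _ pi_pos.ne']
    linarith
  calc Icirc α r R ≤ ∫ θ in -π..π, 4 * r / (R - r) ^ α * ((R - r + c * |θ|) ^ 2)⁻¹ :=
        integral_mono_on (by linarith [pi_pos])
          ((continuous_div_norm_mul_exp_sub_rpow hr.le hrR).intervalIntegrable _ _)
          (((continuous_inv_sq_add_mul_abs hd hc).intervalIntegrable _ _).const_mul _) hfar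
    _ = 4 * r / (R - r) ^ α * (2 * π / ((R - r) * (R - r + c * π))) := by
        rw [integral_const_mul, integral_inv_sq_add_mul_abs hd hc pi_pos.le]
    _ = 8 * π * (r / ((R - r + c * π) * (R - r) ^ (1 + α))) := by
        rw [add_comm (1 : ℝ), rpow_add_one hd.ne']
        field_simp
        ring
    _ ≤ 8 * π * (r / (R * (R - r) ^ (1 + α))) := by
        have hR : 0 < R := hr.trans hrR
        gcongr

end OffCircle

theorem Icirc_bounds_outside (α : ℝ) (hα : 0 < α) :
    ∃ a : ℝ, 1 < a ∧ ∀ r : ℝ, 0 < r → ∀ x : ℂ, r < ‖x‖ →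
      a⁻¹ * (r / (‖x‖ * (‖x‖ - r) ^ (1 + α))) ≤ Icirc α r x ∧
      Icirc α r x ≤ a * (r / (‖x‖ * (‖x‖ - r) ^ (1 + α))) := by
  have h2 : 1 ≤ (2 : ℝ) ^ (2 + α) := one_le_rpow one_le_two (by linarith)
  have h8π : 1 < 8 * π := by linarith [pi_gt_three]
  refine ⟨8 * π * 2 ^ (2 + α), by nlinarith, fun r hr x hx => ?_⟩
  have hT : 0 ≤ r / (‖x‖ * (‖x‖ - r) ^ (1 + α)) := by
    have := sub_pos.2 hx
    positivity
  rw [Icirc_eq_Icirc_norm]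
  constructor
  · exact le_trans (mul_le_mul_of_nonneg_right
      (inv_anti₀ (by positivity) (le_mul_of_one_le_left (by positivity) h8π.le)) hT)
      (inv_two_rpow_mul_le_Icirc (by linarith) hr hx)
  · exact (Icirc_le_eight_pi_mul hα.le hr hx).trans
      (mul_le_mul_of_nonneg_right (le_mul_of_one_le_right (by positivity) h2) hT)
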